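/- arXiv:2602.15773 — 2 statements merged into one kernel-verified Lean document; each statement's English description precedes it below -/
import Mathlib

section
/- Let V be a finite type and MF : Finset V → Finset V → ℝ be monotone in each argument (removing an element of the source set or sink set does not increase MF). Define PF u S T as MF S T − MF (S \ {u}) T when u ∈ S and MF S T − MF S (T \ {u}) when u ∈ T. Then for disjoint S T : Finset V, s ∈ S, and t ∈ T: (1) PF t (S \ {s}) T ≥ PF t S T − PF s S T, and (2) PF s S (T \ {t}) ≥ PF s S T − PF t S T. -/
/-- Peeling flow: the decrease in maximum-flow value when `u` is removed from `S ∪ T`. -/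
noncomputable def PF {V : Type*} [DecidableEq V]
    (MF : Finset V → Finset V → ℝ) (u : V) (S T : Finset V) : ℝ :=
  if u ∈ S then MF S T - MF (S \ {u}) T else MF S T - MF S (T \ {u})

section PeelingFlow

variable {V : Type*} [DecidableEq V] (MF : Finset V → Finset V → ℝ) {S T : Finset V} {s t u : V}

theorem PF_of_mem (hu : u ∈ S) : PF MF u S T = MF S T - MF (S \ {u}) T :=
  if_pos hu

theorem PF_of_notMem (hu : u ∉ S) : PF MF u S T = MF S T - MF S (T \ {u}) :=
  if_neg hu

theorem PF_sub_PF_le_PF_sdiff_source (hmono : MF (S \ {s}) (T \ {t}) ≤ MF S (T \ {t}))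
    (hs : s ∈ S) (ht : t ∉ S) :
    PF MF t S T - PF MF s S T ≤ PF MF t (S \ {s}) T := by
  have ht' : t ∉ S \ {s} := fun h => ht (Finset.mem_sdiff.mp h).1
  rw [PF_of_notMem MF ht, PF_of_mem MF hs, PF_of_notMem MF ht']
  linarith

theorem PF_sub_PF_le_PF_sdiff_sink (hmono : MF (S \ {s}) (T \ {t}) ≤ MF (S \ {s}) T)
    (hs : s ∈ S) (ht : t ∉ S) :
    PF MF s S T - PF MF t S T ≤ PF MF s S (T \ {t}) := by
  rw [PF_of_mem MF hs, PF_of_notMem MF ht, PF_of_mem MF hs]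
  linarith

end PeelingFlow

theorem peeling_flow_lower_bounds_general {V : Type*} [DecidableEq V]
    (MF : Finset V → Finset V → ℝ)
    (hmonoS : ∀ (S T : Finset V), ∀ u ∈ S, MF (S \ {u}) T ≤ MF S T)
    (hmonoT : ∀ (S T : Finset V), ∀ u ∈ T, MF S (T \ {u}) ≤ MF S T)
    (S T : Finset V) (hdisj : Disjoint S T) (s : V) (hs : s ∈ S) (t : V) (ht : t ∈ T) :
    PF MF t (S \ {s}) T ≥ PF MF t S T - PF MF s S T ∧
    PF MF s S (T \ {t}) ≥ PF MF s S T - PF MF t S T := by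
  have htS : t ∉ S := Finset.disjoint_right.mp hdisj ht
  exact ⟨PF_sub_PF_le_PF_sdiff_source MF (hmonoS S (T \ {t}) s hs) hs htS,
    PF_sub_PF_le_PF_sdiff_sink MF (hmonoT (S \ {s}) T t ht) hs htS⟩

theorem peeling_flow_lower_bounds {V : Type*} [Fintype V] [DecidableEq V]
    (MF : Finset V → Finset V → ℝ)
    (hmonoS : ∀ (S T : Finset V), ∀ u ∈ S, MF (S \ {u}) T ≤ MF S T)
    (hmonoT : ∀ (S T : Finset V), ∀ u ∈ T, MF S (T \ {u}) ≤ MF S T)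
    (S T : Finset V) (hdisj : Disjoint S T) (s : V) (hs : s ∈ S) (t : V) (ht : t ∈ T) :
    PF MF t (S \ {s}) T ≥ PF MF t S T - PF MF s S T ∧
    PF MF s S (T \ {t}) ≥ PF MF s S T - PF MF t S T :=
  peeling_flow_lower_bounds_general MF hmonoS hmonoT S T hdisj s hs t ht
end

section
/- Let V be a finite type, MF : Finset V → Finset V → ℝ, and let (S₁, T₁), (S₂, T₂) be two component pairs such that MF is additive across them: for all S₁' ⊆ S₁, T₁' ⊆ T₁, S₂' ⊆ S₂, T₂' ⊆ T₂ (with S₁ ∩ S₂ = ∅ and T₁ ∩ T₂ = ∅), MF (S₁' ∪ S₂') (T₁' ∪ T₂') = MF S₁' T₁' + MF S₂' T₂'. Define DF₁ k = sup over subsets S' ⊆ S₁, T' ⊆ T₁ with |S'| + |T'| = k of MF S' T', and define DF₂ analogously. Then the densest-flow array of the union satisfies, for every k: sup over S' ⊆ S₁ ∪ S₂, T' ⊆ T₁ ∪ T₂ with |S'| + |T'| = k of MF S' T' = max over k₁ + k₂ = k (with k₁ ≤ |S₁| + |T₁|, k₂ ≤ |S₂| + |T₂|) of DF₁ k₁ +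 DF₂ k₂. -/
/-!
A pair `(S', T')` in the union splits uniquely into its traces on the two components, and both
the size and, by additivity, the flow value split accordingly; so every candidate on the union is
dominated by a sum `DF₁ k₁ + DF₂ k₂`. Conversely, each such sum is attained by optimal pairs of the
components, whose union is a candidate of size `k₁ + k₂`. Mutual domination gives equal suprema,
also when `k` is too large and both candidate sets are empty.
-/

/-- Densest-flow array: `DF MF S T k` is the best flow value achievable by
subsets `S' ⊆ S`, `T' ⊆ T` of combined size exactly `k`. -/
noncomputable def DF {V : Type*} [DecidableEq V]
    (MF : Finset V → Finset V → ℝ) (S T : Finset V) (k : ℕ) : ℝ :=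
  sSup {x : ℝ | ∃ S' ⊆ S, ∃ T' ⊆ T, S'.card + T'.card = k ∧ x = MF S' T'}

open Finset

theorem Finset.card_inter_add_card_inter_of_subset_union {α : Type*} [DecidableEq α]
    {s t u : Finset α} (h : s ⊆ t ∪ u) (htu : Disjoint t u) :
    #(s ∩ t) + #(s ∩ u) = #s := by
  rw [← card_union_of_disjoint (htu.mono inter_subset_right inter_subset_right),
    ← inter_union_distrib_left, inter_eq_left.mpr h]

section DensestFlow

variable {V : Type*} (MF : Finset V → Finset V → ℝ)

theorem finite_DF_values (S T : Finset V) (k : ℕ) :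
    {x : ℝ | ∃ S' ⊆ S, ∃ T' ⊆ T, #S' + #T' = k ∧ x = MF S' T'}.Finite := by
  refine ((S.powerset ×ˢ T.powerset).finite_toSet.image fun p => MF p.1 p.2).subset ?_
  rintro _ ⟨S', hS', T', hT', -, rfl⟩
  exact ⟨(S', T'), by simp [hS', hT'], rfl⟩

variable [DecidableEq V]

theorem le_DF {S T S' T' : Finset V} (hS' : S' ⊆ S) (hT' : T' ⊆ T) :
    MF S' T' ≤ DF MF S T (#S' + #T') :=
  le_csSup (finite_DF_values MF S T _).bddAbove ⟨S', hS', T', hT', rfl, rfl⟩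

theorem exists_DF_eq {S T : Finset V} {k : ℕ} (hk : k ≤ #S + #T) :
    ∃ S' ⊆ S, ∃ T' ⊆ T, #S' + #T' = k ∧ DF MF S T k = MF S' T' := by
  obtain ⟨S', hS', hcS'⟩ := exists_subset_card_eq (min_le_right k #S)
  obtain ⟨T', hT', hcT'⟩ := exists_subset_card_eq (s := T) (n := k - min k #S) (by omega)
  refine Set.Nonempty.csSup_mem ?_ (finite_DF_values MF S T k)
  exact ⟨MF S' T', S', hS', T', hT', by omega, rfl⟩

theorem MF_eq_add_of_subset_union {S₁ T₁ S₂ T₂ S' T' : Finset V}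
    (hadd : ∀ S₁' ⊆ S₁, ∀ T₁' ⊆ T₁, ∀ S₂' ⊆ S₂, ∀ T₂' ⊆ T₂,
      MF (S₁' ∪ S₂') (T₁' ∪ T₂') = MF S₁' T₁' + MF S₂' T₂')
    (hS' : S' ⊆ S₁ ∪ S₂) (hT' : T' ⊆ T₁ ∪ T₂) :
    MF S' T' = MF (S' ∩ S₁) (T' ∩ T₁) + MF (S' ∩ S₂) (T' ∩ T₂) := by
  rw [← hadd _ inter_subset_right _ inter_subset_right _ inter_subset_right _ inter_subset_right,
    ← inter_union_distrib_left, ← inter_union_distrib_left, inter_eq_left.mpr hS',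
    inter_eq_left.mpr hT']

end DensestFlow

theorem densest_flow_merge_correct_general {V : Type*} [DecidableEq V]
    (MF : Finset V → Finset V → ℝ)
    (S₁ T₁ S₂ T₂ : Finset V)
    (hS : Disjoint S₁ S₂) (hT : Disjoint T₁ T₂)
    (hadd : ∀ S₁' ⊆ S₁, ∀ T₁' ⊆ T₁, ∀ S₂' ⊆ S₂, ∀ T₂' ⊆ T₂,
      MF (S₁' ∪ S₂') (T₁' ∪ T₂') = MF S₁' T₁' + MF S₂' T₂') :
    ∀ k : ℕ,
      DF MF (S₁ ∪ S₂) (T₁ ∪ T₂) k =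
      sSup {x : ℝ | ∃ k₁ k₂, k₁ + k₂ = k ∧ k₁ ≤ S₁.card + T₁.card ∧
        k₂ ≤ S₂.card + T₂.card ∧ x = DF MF S₁ T₁ k₁ + DF MF S₂ T₂ k₂} := by
  intro k
  apply csSup_eq_csSup_of_forall_exists_le
  · rintro _ ⟨S', hS', T', hT', rfl, rfl⟩
    have hcard : #(S' ∩ S₁) + #(T' ∩ T₁) + (#(S' ∩ S₂) + #(T' ∩ T₂)) = #S' + #T' := by
      rw [← card_inter_add_card_inter_of_subset_union hS' hS,
        ← card_inter_add_card_inter_of_subset_union hT' hT, add_add_add_comm]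
    refine ⟨_, ⟨_, _, hcard, ?_, ?_, rfl⟩, ?_⟩
    · exact add_le_add (card_le_card inter_subset_right) (card_le_card inter_subset_right)
    · exact add_le_add (card_le_card inter_subset_right) (card_le_card inter_subset_right)
    · rw [MF_eq_add_of_subset_union MF hadd hS' hT']
      exact add_le_add (le_DF MF inter_subset_right inter_subset_right)
        (le_DF MF inter_subset_right inter_subset_right)
  · rintro _ ⟨k₁, k₂, rfl, hk₁, hk₂, rfl⟩
    obtain ⟨S₁', hS₁', T₁', hT₁', rfl, hDF₁⟩ := exists_DF_eq MF hk₁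
    obtain ⟨S₂', hS₂', T₂', hT₂', rfl, hDF₂⟩ := exists_DF_eq MF hk₂
    refine ⟨_, ⟨S₁' ∪ S₂', union_subset_union hS₁' hS₂', T₁' ∪ T₂',
      union_subset_union hT₁' hT₂', ?_, rfl⟩, ?_⟩
    · rw [card_union_of_disjoint (hS.mono hS₁' hS₂'), card_union_of_disjoint (hT.mono hT₁' hT₂'),
        add_add_add_comm]
    · rw [hDF₁, hDF₂, hadd _ hS₁' _ hT₁' _ hS₂' _ hT₂']

theorem densest_flow_merge_correct {V : Type*} [Fintype V] [DecidableEq V]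
    (MF : Finset V → Finset V → ℝ)
    (S₁ T₁ S₂ T₂ : Finset V)
    (hS : Disjoint S₁ S₂) (hT : Disjoint T₁ T₂)
    (hadd : ∀ S₁' ⊆ S₁, ∀ T₁' ⊆ T₁, ∀ S₂' ⊆ S₂, ∀ T₂' ⊆ T₂,
      MF (S₁' ∪ S₂') (T₁' ∪ T₂') = MF S₁' T₁' + MF S₂' T₂') :
    ∀ k : ℕ,
      DF MF (S₁ ∪ S₂) (T₁ ∪ T₂) k =
      sSup {x : ℝ | ∃ k₁ k₂, k₁ + k₂ = k ∧ k₁ ≤ S₁.card + T₁.card ∧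
        k₂ ≤ S₂.card + T₂.card ∧ x = DF MF S₁ T₁ k₁ + DF MF S₂ T₂ k₂} :=
  densest_flow_merge_correct_general MF S₁ T₁ S₂ T₂ hS hT hadd
end
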